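/- arXiv:1309.4030 — 10 statements merged into one kernel-verified Lean document; each statement's English description precedes it below -/
import Mathlib

section
/- Let p be an odd prime and let x, y be coprime integers. Write H_p = (x^p + y^p)/(x + y) (assuming x + y ≠ 0). Then gcd(x + y, H_p) = 1 or gcd(x + y, H_p) = p. -/
/-!
Since `p` is odd, `H_p = ∑ xⁱ(-y)^(p-1-i)`, and modulo any divisor `d` of `x + y` we have
`-y ≡ x`, so `H_p ≡ p x^(p-1)`. A common divisor of `x + y` and `H_p` is coprime to `x`
(as `x, y` are coprime), hence divides `p`.
-/

open Finset

theorem Int.pow_add_pow_div_add_eq_geom_sum₂ {n : ℕ} (hn : Odd n) (x y : ℤ) (hxy : x + y ≠ 0) :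
    (x ^ n + y ^ n) / (x + y) = ∑ i ∈ Finset.range n, x ^ i * (-y) ^ (n - 1 - i) := by
  have h := geom_sum₂_mul x (-y) n
  rw [hn.neg_pow, sub_neg_eq_add, sub_neg_eq_add] at h
  rw [← h, Int.mul_ediv_cancel _ hxy]

theorem IsCoprime.of_dvd_add_left {R : Type*} [CommRing R] {d x y : R} (hxy : IsCoprime x y)
    (hd : d ∣ x + y) : IsCoprime d x := by
  have : IsCoprime (y + x * 1) x := hxy.symm.add_mul_left_left 1
  exact this.of_isCoprime_of_dvd_left (by rwa [mul_one, add_comm])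

theorem gcd_Hp_eq_one_or_p (p : ℕ) (hp : p.Prime) (hodd : Odd p)
    (x y : ℤ) (hxy : IsCoprime x y) (hne : x + y ≠ 0) :
    Int.gcd (x + y) ((x ^ p + y ^ p) / (x + y)) = 1 ∨
    Int.gcd (x + y) ((x ^ p + y ^ p) / (x + y)) = p := by
  set d := Int.gcd (x + y) ((x ^ p + y ^ p) / (x + y))
  have hd_sum : (d : ℤ) ∣ x + y := Int.gcd_dvd_left _ _
  have hd_H : (d : ℤ) ∣ ∑ i ∈ range p, x ^ i * (-y) ^ (p - 1 - i) := by
    rw [← Int.pow_add_pow_div_add_eq_geom_sum₂ hodd x y hne]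
    exact Int.gcd_dvd_right _ _
  have hd_mul : (d : ℤ) ∣ p * x ^ (p - 1) :=
    (dvd_geom_sum₂_iff_of_dvd_sub' (by rwa [sub_neg_eq_add])).mp hd_H
  have hd_p : (d : ℤ) ∣ p := (hxy.of_dvd_add_left hd_sum).pow_right.dvd_of_dvd_mul_right hd_mul
  exact hp.eq_one_or_self_of_dvd d (Int.natCast_dvd_natCast.mp hd_p)
end

section
/- Let p be an odd prime and let x, y be coprime integers with x + y ≠ 0, and let H_p = (x^p + y^p)/(x + y). Then p divides x + y if and only if p divides H_p. -/
theorem p_dvd_sum_iff_p_dvd_Hp (p : ℕ) (hp : p.Prime) (hodd : Odd p)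
    (x y : ℤ) (hxy : IsCoprime x y) (hne : x + y ≠ 0) :
    (p : ℤ) ∣ x + y ↔ (p : ℤ) ∣ (x ^ p + y ^ p) / (x + y) := by
  haveI : Fact p.Prime := ⟨hp⟩
  set S : ℤ := ∑ i ∈ Finset.range p, x ^ i * (-y) ^ (p - 1 - i) with hS
  have hmul : S * (x + y) = x ^ p + y ^ p := by
    have h := geom_sum₂_mul x (-y) p
    rw [hodd.neg_pow] at h
    simpa [sub_neg_eq_add] using h
  have hdiv : (x ^ p + y ^ p) / (x + y) = S := by
    rw [← hmul, Int.mul_ediv_cancel _ hne]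
  rw [hdiv]
  have hkey : (x + y) ∣ S - p * x ^ (p - 1) := by
    have hpow : ∀ i ∈ Finset.range p, x ^ i * x ^ (p - 1 - i) = x ^ (p - 1) := by
      intro i hi
      rw [← pow_add]
      congr 1
      have := Finset.mem_range.mp hi
      omega
    have hsum : S - p * x ^ (p - 1)
        = ∑ i ∈ Finset.range p, x ^ i * ((-y) ^ (p - 1 - i) - x ^ (p - 1 - i)) := by
      simp only [mul_sub]
      rw [Finset.sum_sub_distrib, Finset.sum_congr rfl hpow, Finset.sum_const,
        Finset.card_range, hS, nsmul_eq_mul]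
    rw [hsum]
    apply Finset.dvd_sum
    intro i _
    apply dvd_mul_of_dvd_right
    have : x - -y ∣ x ^ (p - 1 - i) - (-y) ^ (p - 1 - i) := sub_dvd_pow_sub_pow _ _ _
    rw [sub_neg_eq_add] at this
    have h2 := dvd_neg.mpr this
    rwa [neg_sub] at h2
  constructor
  · intro h
    have h1 : (p : ℤ) ∣ S - p * x ^ (p - 1) := dvd_trans h hkey
    have h2 : (p : ℤ) ∣ (p : ℤ) * x ^ (p - 1) := Dvd.intro _ rfl
    have := dvd_add h1 h2
    simpa using this
  · intro h
    have h2 : (p : ℤ) ∣ x ^ p + y ^ p := hmul ▸ h.mul_right (x + y)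
    rw [← ZMod.intCast_zmod_eq_zero_iff_dvd] at h2 ⊢
    push_cast at h2 ⊢
    rwa [ZMod.pow_card, ZMod.pow_card] at h2
end

section
/- Let p be an odd prime and let x, y be coprime integers with x + y ≠ 0, and let H_p = (x^p + y^p)/(x + y). Then p^2 does not divide H_p. -/
/-!
Write `H = (x ^ p + y ^ p) / (x + y)`. By Fermat, `x ^ p + y ^ p ≡ x + y [ZMOD p]`, so `p ∣ H`
forces `p ∣ x + y`, and then coprimality keeps `p` from dividing `x`. Lifting the exponent gives
`v_p(x ^ p + y ^ p) = v_p(x + y) + 1`, that is `v_p(H) = 1`.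
-/

theorem Int.pow_prime_add_pow_prime_modEq {p : ℕ} (hp : p.Prime) (x y : ℤ) :
    x ^ p + y ^ p ≡ x + y [ZMOD p] :=
  (Int.ModEq.pow_prime_eq_self hp x).add (Int.ModEq.pow_prime_eq_self hp y)

theorem Int.emultiplicity_pow_add_pow_div_add {p : ℕ} (hp : p.Prime) (hodd : Odd p) {x y : ℤ}
    (hxy : (p : ℤ) ∣ x + y) (hx : ¬ (p : ℤ) ∣ x) (hne : x + y ≠ 0) :
    emultiplicity (p : ℤ) ((x ^ p + y ^ p) / (x + y)) = 1 := by
  have hfin : emultiplicity (p : ℤ) (x + y) ≠ ⊤ :=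
    finiteMultiplicity_iff_emultiplicity_ne_top.mp <|
      Int.finiteMultiplicity_iff.mpr ⟨by simpa using hp.ne_one, hne⟩
  have lte := Int.emultiplicity_pow_add_pow hp hodd hxy hx hodd
  rw [← Int.mul_ediv_cancel' (hodd.add_dvd_pow_add_pow x y),
    emultiplicity_mul (Nat.prime_iff_prime_int.mp hp), hp.emultiplicity_self] at lte
  exact WithTop.add_left_cancel hfin lte

theorem p_sq_not_dvd_Hp (p : ℕ) (hp : p.Prime) (hodd : Odd p)
    (x y : ℤ) (hxy : IsCoprime x y) (hne : x + y ≠ 0) :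
    ¬ ((p : ℤ) ^ 2 ∣ (x ^ p + y ^ p) / (x + y)) := by
  intro hsq
  have hpH : (p : ℤ) ∣ (x ^ p + y ^ p) / (x + y) := (dvd_pow_self _ two_ne_zero).trans hsq
  have hp_sum : (p : ℤ) ∣ x ^ p + y ^ p := by
    rw [← Int.mul_ediv_cancel' (hodd.add_dvd_pow_add_pow x y)]
    exact dvd_mul_of_dvd_right hpH _
  have hps : (p : ℤ) ∣ x + y := Int.modEq_zero_iff_dvd.mp <|
    (Int.pow_prime_add_pow_prime_modEq hp x y).symm.trans (Int.modEq_zero_iff_dvd.mpr hp_sum)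
  have hpx : ¬ (p : ℤ) ∣ x := fun hx =>
    (Nat.prime_iff_prime_int.mp hp).not_isUnit (hxy.isUnit_of_dvd' hx ((dvd_add_right hx).mp hps))
  have h2 := le_emultiplicity_of_pow_dvd hsq
  rw [Int.emultiplicity_pow_add_pow_div_add hp hodd hps hpx hne] at h2
  norm_num at h2
end

section
/- Let l be an odd prime. Suppose the only rational points on the hyperelliptic curve C_l : Y^2 = 20 X^l + 5 are the point at infinity and (1, 5) and (1, -5). Then there are no nonzero coprime integers x, y, z with x^5 + y^5 = z^l, xyz ≠ 0, and 5 not dividing z. -/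
/-!
With `s = x + y` and `t = x y` one has `x⁵ + y⁵ = s q`, where `q = s⁴ - 5 s² t + 5 t²`.
When `x, y` are coprime, `s` and `t` are coprime, so any common factor of `s` and `q` divides `5`;
since `5 ∤ z`, the factors `s` and `q` are coprime and hence both `l`-th powers, `s = aˡ`, `q = bˡ`.
The identity `(10 t - 5 s²)² = 20 q + 5 s⁴` then makes `(b / a⁴, 10 t / s² - 5)` a rational point of
`C_l`. Its `Y`-coordinate being `±5` forces `t = 0` or `t = s²`, i.e. `x y = 0` or
`x² + x y + y² = 0`, both impossible for nonzero integers.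
-/

section CommRing

variable {R : Type*} [CommRing R]

theorem add_pow_five_eq_mul (x y : R) :
    x ^ 5 + y ^ 5 =
      (x + y) * ((x + y) ^ 4 - 5 * (x + y) ^ 2 * (x * y) + 5 * (x * y) ^ 2) := by
  ring

theorem IsCoprime.add_mul_self {x y : R} (h : IsCoprime x y) : IsCoprime (x + y) (x * y) := by
  have hx : IsCoprime (x + y) x := by simpa [add_comm] using h.symm.add_mul_left_left 1
  have hy : IsCoprime (x + y) y := by simpa using h.add_mul_left_left 1
  exact hx.mul_right hy

theorem IsCoprime.quintic_cofactor {s t : R} (hst : IsCoprime s t) (hs5 : IsCoprime s 5) :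
    IsCoprime s (s ^ 4 - 5 * s ^ 2 * t + 5 * t ^ 2) := by
  have h : s ^ 4 - 5 * s ^ 2 * t + 5 * t ^ 2 = 5 * t ^ 2 + s * (s ^ 3 - 5 * s * t) := by ring
  rw [h]
  exact (hs5.mul_right hst.pow_right).add_mul_left_right _

end CommRing

theorem curve_eq_of_eq_pow {K : Type*} [Field K] {s t a b : K} {l : ℕ} (hs : s ≠ 0)
    (ha : s = a ^ l) (hb : s ^ 4 - 5 * s ^ 2 * t + 5 * t ^ 2 = b ^ l) :
    (10 * t / s ^ 2 - 5) ^ 2 = 20 * (b / a ^ 4) ^ l + 5 := by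
  rw [div_pow, ← pow_mul, mul_comm 4 l, pow_mul, ← ha, ← hb]
  field_simp
  ring

theorem add_sq_ne_mul {R : Type*} [CommRing R] [LinearOrder R] [IsStrictOrderedRing R]
    {x y : R} (hx : x ≠ 0) : (x + y) ^ 2 ≠ x * y := by
  intro h
  have hx2 : 0 < x ^ 2 := by positivity
  nlinarith [sq_nonneg (2 * x + y), sq_nonneg y]

theorem exists_curve_point_of_add_pow_five_eq_pow {l : ℕ} (hodd : Odd l) {x y z : ℤ}
    (hxy : IsCoprime x y) (heq : x ^ 5 + y ^ 5 = z ^ l) (hz : z ≠ 0) (h5z : ¬ (5 ∣ z)) :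
    x + y ≠ 0 ∧ ∃ X : ℚ,
      (10 * ((x * y : ℤ) : ℚ) / ((x + y : ℤ) : ℚ) ^ 2 - 5) ^ 2 = 20 * X ^ l + 5 := by
  set s := x + y
  set t := x * y
  have hfac : s * (s ^ 4 - 5 * s ^ 2 * t + 5 * t ^ 2) = z ^ l := by
    rw [← heq, add_pow_five_eq_mul]
  have h5 : Prime (5 : ℤ) := by norm_num
  have h5s : ¬ (5 : ℤ) ∣ s := fun h => h5z (h5.dvd_of_dvd_pow (hfac ▸ h.mul_right _))
  have hs5 : IsCoprime s 5 := (h5.coprime_iff_not_dvd.mpr h5s).symm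
  obtain ⟨⟨a, ha⟩, ⟨b, hb⟩⟩ :=
    Int.eq_pow_of_mul_eq_pow_odd (hxy.add_mul_self.quintic_cofactor hs5) hodd hfac
  have hs : s ≠ 0 := by
    intro h
    rw [h, zero_mul] at hfac
    exact hz ((pow_eq_zero_iff hodd.pos.ne').mp hfac.symm)
  refine ⟨hs, (b : ℚ) / (a : ℚ) ^ 4, curve_eq_of_eq_pow (by exact_mod_cast hs) ?_ ?_⟩
  · exact_mod_cast ha
  · exact_mod_cast hb

theorem no_solutions_55l_five_not_dvd_general (l : ℕ) (hodd : Odd l)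
    (hC : ∀ X Y : ℚ, Y ^ 2 = 20 * X ^ l + 5 → X = 1 ∧ (Y = 5 ∨ Y = -5)) :
    ¬ ∃ x y z : ℤ, IsCoprime x y ∧ x ^ 5 + y ^ 5 = z ^ l ∧ x * y * z ≠ 0 ∧ ¬ (5 ∣ z) := by
  rintro ⟨x, y, z, hxy, heq, hne, h5z⟩
  have hx : x ≠ 0 := left_ne_zero_of_mul (left_ne_zero_of_mul hne)
  have hxy0 : x * y ≠ 0 := left_ne_zero_of_mul hne
  obtain ⟨hs, X, hpt⟩ :=
    exists_curve_point_of_add_pow_five_eq_pow hodd hxy heq (right_ne_zero_of_mul hne) h5z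
  rcases (hC X _ hpt).2 with hY | hY
  · have h : ((x + y : ℤ) : ℚ) ^ 2 = ((x * y : ℤ) : ℚ) := by
      field_simp at hY
      linarith
    exact add_sq_ne_mul hx (by exact_mod_cast h)
  · have h : ((x * y : ℤ) : ℚ) = 0 := by
      field_simp at hY
      linarith
    exact hxy0 (by exact_mod_cast h)

theorem no_solutions_55l_five_not_dvd (l : ℕ) (hl : l.Prime) (hodd : Odd l)
    (hC : ∀ X Y : ℚ, Y ^ 2 = 20 * X ^ l + 5 → X = 1 ∧ (Y = 5 ∨ Y = -5)) :
    ¬ ∃ x y z : ℤ, IsCoprime x y ∧ x ^ 5 + y ^ 5 = z ^ l ∧ x * y * z ≠ 0 ∧ ¬ (5 ∣ z) :=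
  no_solutions_55l_five_not_dvd_general l hodd hC
end

section
/- Let l be an odd prime. Suppose the only rational point on the hyperelliptic curve D_l : Y^2 = 4 X^l + 5^{2l-5} is the point at infinity. Then there are no nonzero coprime integers x, y, z with x^5 + y^5 = z^l, xyz ≠ 0, and 5 dividing z. -/
-- extraction of 5-power
lemma aux_exists_pow5 : ∀ N : ℕ, ∀ n : ℤ, n.natAbs = N → n ≠ 0 →
    ∃ (k : ℕ) (c : ℤ), ¬ (5:ℤ) ∣ c ∧ n = 5 ^ k * c := by
  intro N
  induction N using Nat.strong_induction_on with
  | _ N ih =>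
    intro n hN hn
    by_cases h : (5:ℤ) ∣ n
    · obtain ⟨n', rfl⟩ := h
      have hn' : n' ≠ 0 := by rintro rfl; simp at hn
      have hlt : n'.natAbs < N := by
        have hm := Int.natAbs_mul (5:ℤ) n'
        norm_num at hm
        have : n'.natAbs ≠ 0 := Int.natAbs_ne_zero.mpr hn'
        omega
      obtain ⟨k, c, hc, hc2⟩ := ih _ hlt n' rfl hn'
      exact ⟨k + 1, c, hc, by rw [hc2, pow_succ]; ring⟩
    · exact ⟨0, n, h, by simp⟩

lemma aux_pow5_unique : ∀ a b : ℕ, ∀ s t : ℤ, ¬ (5:ℤ) ∣ s → ¬ (5:ℤ) ∣ t →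
    5 ^ a * s = 5 ^ b * t → a = b ∧ s = t := by
  have key : ∀ a b : ℕ, a ≤ b → ∀ s t : ℤ, ¬ (5:ℤ) ∣ s → ¬ (5:ℤ) ∣ t →
      5 ^ a * s = 5 ^ b * t → a = b ∧ s = t := by
    intro a b hab s t hs ht h
    obtain ⟨c, rfl⟩ := Nat.exists_eq_add_of_le hab
    rw [pow_add, mul_assoc] at h
    have h5 : (5:ℤ) ^ a ≠ 0 := pow_ne_zero _ (by norm_num)
    have hst : s = 5 ^ c * t := mul_left_cancel₀ h5 h
    rcases Nat.eq_zero_or_pos c with rfl | hc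
    · simp at hst; exact ⟨by omega, hst⟩
    · exfalso
      exact hs ⟨5 ^ (c - 1) * t, by rw [hst, ← mul_assoc, ← pow_succ']; congr 2; omega⟩
  intro a b s t hs ht h
  rcases le_total a b with hab | hab
  · exact key a b hab s t hs ht h
  · obtain ⟨h1, h2⟩ := key b a hab t s ht hs h.symm
    exact ⟨h1.symm, h2.symm⟩

theorem no_solutions_55l_five_dvd (l : ℕ) (hl : l.Prime) (hodd : Odd l)
    (hD : ∀ X Y : ℚ, Y ^ 2 ≠ 4 * X ^ l + 5 ^ (2 * l - 5)) :
    ¬ ∃ x y z : ℤ, IsCoprime x y ∧ x ^ 5 + y ^ 5 = z ^ l ∧ x * y * z ≠ 0 ∧ 5 ∣ z := by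
  rintro ⟨x, y, z, hcop, heq, hne, h5z⟩
  obtain ⟨t, ht⟩ : ∃ t, l = 2 * t + 3 := by
    have h2 := hl.two_le
    obtain ⟨s, hs⟩ := hodd
    rcases s with _ | s
    · omega
    · exact ⟨s, by omega⟩
  have hz : z ≠ 0 := by rintro rfl; simp at hne
  have hzl : z ^ l ≠ 0 := pow_ne_zero _ hz
  have hprime5 : Prime (5:ℤ) := Int.prime_iff_natAbs_prime.mpr (by norm_num)
  -- 5 ∣ x + y by Fermat's little theorem
  have h5xy : (5:ℤ) ∣ x + y := by
    have hflt : ∀ r : ZMod 5, r ^ 5 = r := by decide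
    have h1 : (5:ℤ) ∣ z ^ l := dvd_pow h5z (by omega)
    rw [← heq] at h1
    have h2 : ((x ^ 5 + y ^ 5 : ℤ) : ZMod 5) = 0 :=
      (ZMod.intCast_zmod_eq_zero_iff_dvd _ 5).mpr h1
    have h3 : ((x + y : ℤ) : ZMod 5) = 0 := by
      push_cast at h2 ⊢
      rw [← hflt x, ← hflt y]
      exact h2
    exact (ZMod.intCast_zmod_eq_zero_iff_dvd _ 5).mp h3
  obtain ⟨u1, hu1⟩ := h5xy
  have hy : y = 5 * u1 - x := by omega
  subst hy
  set v : ℤ := x * (5 * u1 - x) with hv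
  set w : ℤ := 125 * u1 ^ 4 - 25 * u1 ^ 2 * v + v ^ 2 with hw
  set N : ℤ := 2 * v - 25 * u1 ^ 2 with hN
  have key1 : z ^ l = 5 * u1 * (5 * w) := by rw [← heq, hw, hv]; ring
  have key2 : 5 * N ^ 2 = 20 * w + (5 * u1) ^ 4 := by rw [hN, hw]; ring
  have hu : (5 : ℤ) * u1 ≠ 0 := by
    intro h; rw [h, zero_mul] at key1; exact hzl key1
  -- coprimality facts
  have hc1 : IsCoprime (5 * u1) (5 * u1 - x) := by
    have h := hcop.add_mul_left_left 1
    have e : x + (5 * u1 - x) * 1 = 5 * u1 := by ring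
    rwa [e] at h
  have hc2 : IsCoprime (5 * u1) x := by
    have h := hcop.symm.add_mul_left_left 1
    have e : 5 * u1 - x + x * 1 = 5 * u1 := by ring
    rwa [e] at h
  have hcuv : IsCoprime (5 * u1) v := hc2.mul_right hc1
  have hcw : IsCoprime (5 * u1) w := by
    have h := (hcuv.pow_right (n := 2)).add_mul_left_right ((5 * u1) * (5 * u1 ^ 2 - v))
    have e : v ^ 2 + 5 * u1 * (5 * u1 * (5 * u1 ^ 2 - v)) = w := by rw [hw]; ring
    rwa [e] at h
  have h5v : ¬ (5:ℤ) ∣ v := by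
    intro h
    have := hcuv.isUnit_of_dvd' ⟨u1, rfl⟩ h
    rw [Int.isUnit_iff] at this
    omega
  have h5w : ¬ (5:ℤ) ∣ w := by
    intro h
    have hv2 : (5:ℤ) ∣ v ^ 2 := by
      have e : v ^ 2 = w + 5 * (5 * u1 ^ 2 * v - 25 * u1 ^ 4) := by rw [hw]; ring
      rw [e]; exact dvd_add h (dvd_mul_right 5 _)
    exact h5v (hprime5.dvd_of_dvd_pow hv2)
  -- 5-adic decompositions
  obtain ⟨m, c, hc5, hzc⟩ := aux_exists_pow5 z.natAbs z rfl hz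
  obtain ⟨k, d, hd5, hud⟩ := aux_exists_pow5 (5 * u1).natAbs (5 * u1) rfl hu
  obtain ⟨m', rfl⟩ : ∃ m', m = m' + 1 := by
    rcases m with _ | m'
    · exfalso; simp at hzc; rw [hzc] at h5z; exact hc5 h5z
    · exact ⟨m', rfl⟩
  have hzl2 : z ^ l = 5 ^ ((m' + 1) * l) * c ^ l := by
    rw [hzc, mul_pow, ← pow_mul]
  have hzl3 : z ^ l = 5 ^ (k + 1) * (d * w) := by
    rw [key1, hud]; ring
  have hc5l : ¬ (5:ℤ) ∣ c ^ l := fun h => hc5 (hprime5.dvd_of_dvd_pow h)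
  have hdw5 : ¬ (5:ℤ) ∣ d * w := fun h => (hprime5.dvd_mul.mp h).elim hd5 h5w
  obtain ⟨hexp, hcdw⟩ :=
    aux_pow5_unique ((m' + 1) * l) (k + 1) (c ^ l) (d * w) hc5l hdw5
      (by rw [← hzl2, hzl3])
  -- extract l-th powers
  have hcd_w : IsCoprime d w := hcw.of_isCoprime_of_dvd_left ⟨5 ^ k, by rw [hud]; ring⟩
  obtain ⟨a, hda⟩ := Int.eq_pow_of_mul_eq_pow_odd_left hcd_w hodd hcdw.symm
  obtain ⟨b, hwb⟩ := Int.eq_pow_of_mul_eq_pow_odd_right hcd_w hodd hcdw.symm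
  have hud2 : 5 * u1 = 5 ^ k * a ^ l := by rw [hud, hda]
  have ha0 : a ≠ 0 := by
    intro h
    rw [h, zero_pow (by omega), mul_zero] at hud2
    exact hu hud2
  -- exponent bookkeeping
  obtain ⟨q, hq⟩ : ∃ q, (m' + 1) * l = q := ⟨_, rfl⟩
  have hlq : l ≤ q := by rw [← hq]; exact Nat.le_mul_of_pos_left l (by omega)
  rw [hq] at hexp
  have hk1 : 1 ≤ k := by omega
  have hkt : 2 * t + 2 ≤ k := by omega
  obtain ⟨r, hr⟩ : ∃ r, (4 * m' + 2) * l = r := ⟨_, rfl⟩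
  have hqr : 4 * q = r + 2 * l := by rw [← hq, ← hr]; ring
  -- key integer identity
  have keyZ : N ^ 2 = 4 * b ^ l + 5 ^ (4 * k - 1) * a ^ (4 * l) := by
    have e2 : ((5:ℤ) ^ k * a ^ l) ^ 4 = 5 * (5 ^ (4 * k - 1) * a ^ (4 * l)) := by
      rw [mul_pow, ← pow_mul, ← pow_mul,
        show k * 4 = (4 * k - 1) + 1 from by omega,
        show l * 4 = 4 * l from by ring, pow_succ]
      ring
    have e1 : 5 * N ^ 2 = 5 * (4 * b ^ l + 5 ^ (4 * k - 1) * a ^ (4 * l)) := by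
      rw [key2, hwb, hud2, e2]; ring
    exact mul_left_cancel₀ (by norm_num : (5:ℤ) ≠ 0) e1
  -- build the rational point
  have hA : ((a : ℚ)) ≠ 0 := Int.cast_ne_zero.mpr ha0
  apply hD ((b : ℚ) / (5 ^ (4 * m' + 2) * (a:ℚ) ^ 4))
    ((N : ℚ) / (5 ^ (2 * k - 2 * t - 1) * (a:ℚ) ^ (2 * l)))
  have h2l5 : 2 * l - 5 = 4 * t + 1 := by omega
  have hdX : ((5:ℚ) ^ (4 * m' + 2) * (a:ℚ) ^ 4) ≠ 0 :=
    mul_ne_zero (pow_ne_zero _ (by norm_num)) (pow_ne_zero _ hA)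
  have hdXl : ((5:ℚ) ^ (4 * m' + 2) * (a:ℚ) ^ 4) ^ l ≠ 0 := pow_ne_zero _ hdX
  have hD2 : ((5:ℚ) ^ (2 * k - 2 * t - 1) * (a:ℚ) ^ (2 * l)) ^ 2
      = ((5:ℚ) ^ (4 * m' + 2) * (a:ℚ) ^ 4) ^ l := by
    rw [mul_pow, mul_pow, ← pow_mul, ← pow_mul, ← pow_mul, ← pow_mul,
      show (2 * k - 2 * t - 1) * 2 = (4 * m' + 2) * l from by omega,
      show (2 * l) * 2 = 4 * l from by ring]
  rw [h2l5, div_pow, div_pow, hD2, div_eq_iff hdXl, add_mul, mul_assoc,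
    div_mul_cancel₀ _ hdXl]
  have hdXl_eq : ((5:ℚ) ^ (4 * m' + 2) * (a:ℚ) ^ 4) ^ l
      = 5 ^ ((4 * m' + 2) * l) * (a:ℚ) ^ (4 * l) := by
    rw [mul_pow, ← pow_mul, ← pow_mul, show 4 * l = l * 4 from by ring]
  rw [hdXl_eq, ← mul_assoc, ← pow_add,
    show 4 * t + 1 + (4 * m' + 2) * l = 4 * k - 1 from by omega]
  exact_mod_cast keyZ
end

section
/- Suppose x, y, z are coprime integers with x^5 + y^5 = z^l for an odd prime l, with xyz ≠ 0 and 5 not dividing z. Then there exist nonzero coprime integers z_1, z_2 with x + y = z_1^l, H_5(x,y) = z_2^l, and z = z_1 z_2, where H_5(x,y) = x^4 - x^3 y + x^2 y^2 - x y^3 + y^4. -/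
/-! Since `(x + y) · H₅(x, y) = x⁵ + y⁵ = zˡ`, it suffices that the two factors are coprime: an odd
power in `ℤ` that splits into coprime factors splits into odd powers. A common divisor of `x + y`
and `H₅(x, y)` divides `5x⁴` and `5y⁴`, hence `5`; and `5 ∤ x + y` because `x + y ∣ zˡ` and
`5 ∤ z`. -/

theorem IsCoprime.add_quartic_of_isCoprime_five {R : Type*} [CommRing R] {x y : R}
    (hxy : IsCoprime x y) (h5 : IsCoprime 5 (x + y)) :
    IsCoprime (x + y) (x ^ 4 - x ^ 3 * y + x ^ 2 * y ^ 2 - x * y ^ 3 + y ^ 4) := by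
  obtain ⟨u, v, huv⟩ := hxy.pow (m := 4) (n := 4)
  obtain ⟨a, b, hab⟩ := h5
  -- `5x⁴ = H₅ - (x + y)(y³ - 2y²x + 3yx² - 4x³)`, symmetrically for `5y⁴`
  refine ⟨b - a * (u * (y ^ 3 - 2 * y ^ 2 * x + 3 * y * x ^ 2 - 4 * x ^ 3)
      + v * (x ^ 3 - 2 * x ^ 2 * y + 3 * x * y ^ 2 - 4 * y ^ 3)), a * (u + v), ?_⟩
  linear_combination hab + 5 * a * huv

theorem Int.exists_coprime_pow_eq_of_mul_eq_pow_odd {a b c : ℤ} {n : ℕ} (hab : IsCoprime a b)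
    (hn : Odd n) (h : a * b = c ^ n) :
    ∃ a' b' : ℤ, IsCoprime a' b' ∧ a = a' ^ n ∧ b = b' ^ n ∧ c = a' * b' := by
  obtain ⟨⟨a', rfl⟩, ⟨b', rfl⟩⟩ := Int.eq_pow_of_mul_eq_pow_odd hab hn h
  refine ⟨a', b', ?_, rfl, rfl, ?_⟩
  · exact (IsCoprime.pow_iff hn.pos hn.pos).mp hab
  · exact hn.pow_inj.mp (by rw [← h, mul_pow])

theorem factorization_55l_case_I_general (l : ℕ) (hodd : Odd l)
    (x y z : ℤ) (hxy : IsCoprime x y) (heq : x ^ 5 + y ^ 5 = z ^ l)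
    (h5 : ¬ (5 : ℤ) ∣ z) :
    ∃ z₁ z₂ : ℤ, z₁ ≠ 0 ∧ z₂ ≠ 0 ∧ IsCoprime z₁ z₂ ∧
      x + y = z₁ ^ l ∧
      x ^ 4 - x ^ 3 * y + x ^ 2 * y ^ 2 - x * y ^ 3 + y ^ 4 = z₂ ^ l ∧
      z = z₁ * z₂ := by
  have hfactor : (x + y) * (x ^ 4 - x ^ 3 * y + x ^ 2 * y ^ 2 - x * y ^ 3 + y ^ 4) = z ^ l := by
    rw [← heq]; ring
  have h5prime : Prime (5 : ℤ) := Int.prime_iff_natAbs_prime.mpr (by norm_num)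
  have h5add : ¬ (5 : ℤ) ∣ x + y := fun h =>
    h5 (h5prime.dvd_of_dvd_pow (hfactor ▸ h.mul_right _))
  have hcop := hxy.add_quartic_of_isCoprime_five (h5prime.coprime_iff_not_dvd.mpr h5add)
  obtain ⟨z₁, z₂, hz₁z₂, h₁, h₂, rfl⟩ := Int.exists_coprime_pow_eq_of_mul_eq_pow_odd hcop hodd hfactor
  have hz₁₂ : z₁ * z₂ ≠ 0 := fun h => h5 (h ▸ dvd_zero 5)
  exact ⟨z₁, z₂, left_ne_zero_of_mul hz₁₂, right_ne_zero_of_mul hz₁₂, hz₁z₂, h₁, h₂, rfl⟩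

theorem factorization_55l_case_I (l : ℕ) (hl : l.Prime) (hodd : Odd l)
    (x y z : ℤ) (hxy : IsCoprime x y) (heq : x ^ 5 + y ^ 5 = z ^ l)
    (hnz : x * y * z ≠ 0) (h5 : ¬ (5 : ℤ) ∣ z) :
    ∃ z₁ z₂ : ℤ, z₁ ≠ 0 ∧ z₂ ≠ 0 ∧ IsCoprime z₁ z₂ ∧
      x + y = z₁ ^ l ∧
      x ^ 4 - x ^ 3 * y + x ^ 2 * y ^ 2 - x * y ^ 3 + y ^ 4 = z₂ ^ l ∧
      z = z₁ * z₂ :=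
  factorization_55l_case_I_general l hodd x y z hxy heq h5
end

section
/- Suppose x, y, z are coprime integers with x^5 + y^5 = z^l for a prime l ≥ 7, with xyz ≠ 0 and 5 dividing z. Then there exist nonzero coprime integers z_1, z_2 with 5(x + y) = z_1^l, H_5(x,y) = 5 z_2^l, and z = z_1 z_2, where H_5(x,y) = x^4 - x^3 y + x^2 y^2 - x y^3 + y^4. -/
/-!
Since `5 ∣ z`, Fermat's little theorem turns `x⁵ + y⁵ ≡ 0` into `5 ∣ x + y`. Writing
`x + y = 5t`, one finds `H₅(x, y) = 5b` with `b ≡ x⁴ (mod x + y)`; as `x + y` is coprime to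
`x`, the factors `5(x + y)` and `b` of `z^l = (x + y) H₅(x, y)` are coprime, hence both are
`l`-th powers because `l` is odd.
-/

section H5

variable {R : Type*} [CommRing R]

def H5 (x y : R) : R := x ^ 4 - x ^ 3 * y + x ^ 2 * y ^ 2 - x * y ^ 3 + y ^ 4

theorem pow_five_add_pow_five (x y : R) : x ^ 5 + y ^ 5 = (x + y) * H5 x y := by
  unfold H5; ring

theorem H5_eq_five_mul_of_add_eq_five_mul {x y t : R} (h : x + y = 5 * t) :
    H5 x y =
      5 * (x ^ 4 + (x + y) * (t * (10 * x ^ 2 - 25 * x * t + 25 * t ^ 2) - 2 * x ^ 3)) := by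
  obtain rfl : y = 5 * t - x := eq_sub_of_add_eq' h
  unfold H5; ring

end H5

theorem prime_dvd_add_of_dvd_pow_add {p : ℕ} (hp : p.Prime) {x y : ℤ}
    (h : (p : ℤ) ∣ x ^ p + y ^ p) : (p : ℤ) ∣ x + y := by
  have := Fact.mk hp
  rw [← ZMod.intCast_zmod_eq_zero_iff_dvd] at h ⊢
  push_cast at h ⊢
  rwa [ZMod.pow_card, ZMod.pow_card] at h

theorem exists_coprime_pow_factors_of_mul_eq_pow_odd {a b c : ℤ} (hab : IsCoprime a b)
    {k : ℕ} (hk : Odd k) (h : a * b = c ^ k) :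
    ∃ c₁ c₂ : ℤ, IsCoprime c₁ c₂ ∧ a = c₁ ^ k ∧ b = c₂ ^ k ∧ c = c₁ * c₂ := by
  obtain ⟨⟨c₁, rfl⟩, ⟨c₂, rfl⟩⟩ := Int.eq_pow_of_mul_eq_pow_odd hab hk h
  refine ⟨c₁, c₂, (IsCoprime.pow_iff hk.pos hk.pos).mp hab, rfl, rfl, ?_⟩
  exact (hk.strictMono_pow.injective (by rw [mul_pow, h])).symm

theorem factorization_55l_case_II (l : ℕ) (hl : l.Prime) (hl7 : 7 ≤ l)
    (x y z : ℤ) (hxy : IsCoprime x y) (heq : x ^ 5 + y ^ 5 = z ^ l)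
    (hnz : x * y * z ≠ 0) (h5 : (5 : ℤ) ∣ z) :
    ∃ z₁ z₂ : ℤ, z₁ ≠ 0 ∧ z₂ ≠ 0 ∧ IsCoprime z₁ z₂ ∧
      5 * (x + y) = z₁ ^ l ∧
      x ^ 4 - x ^ 3 * y + x ^ 2 * y ^ 2 - x * y ^ 3 + y ^ 4 = 5 * z₂ ^ l ∧
      z = z₁ * z₂ := by
  have hz : z ≠ 0 := right_ne_zero_of_mul hnz
  have h5s : (5 : ℤ) ∣ x + y := by
    refine prime_dvd_add_of_dvd_pow_add (p := 5) (by norm_num) ?_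
    exact heq ▸ h5.trans (dvd_pow_self z (by omega))
  obtain ⟨t, ht⟩ := h5s
  set b := x ^ 4 + (x + y) * (t * (10 * x ^ 2 - 25 * x * t + 25 * t ^ 2) - 2 * x ^ 3)
  have hH : H5 x y = 5 * b := H5_eq_five_mul_of_add_eq_five_mul ht
  have hsx : IsCoprime (x + y) x := by simpa [add_comm] using hxy.symm.add_mul_left_left 1
  have hsb : IsCoprime (x + y) b := (hsx.pow_right (n := 4)).add_mul_left_right _
  have hcop : IsCoprime (5 * (x + y)) b :=
    (hsb.of_isCoprime_of_dvd_left ⟨t, ht⟩).mul_left hsb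
  have hmul : 5 * (x + y) * b = z ^ l := by
    rw [← heq, pow_five_add_pow_five, hH]; ring
  obtain ⟨z₁, z₂, hz₁₂, hz₁, hz₂, rfl⟩ :=
    exists_coprime_pow_factors_of_mul_eq_pow_odd hcop (hl.odd_of_ne_two (by omega)) hmul
  exact ⟨z₁, z₂, left_ne_zero_of_mul hz, right_ne_zero_of_mul hz, hz₁₂, hz₁,
    by rw [← hz₂, ← hH]; rfl, rfl⟩
end

section
/- Suppose x, y, z are coprime integers with x^7 + y^7 = z^l for a prime l not equal to 2, 3, or 7, with z ≠ 0 and 7 not dividing z. Then there exist nonzero coprime integers z_1, z_2 with x + y = z_1^l, H_7(x,y) = z_2^l, and z = z_1 z_2, where H_7(x,y) = x^6 - x^5 y + x^4 y^2 - x^3 y^3 + x^2 y^4 - x y^5 + y^6. -/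
theorem factorization_77l_case_I (l : ℕ) (hl : l.Prime) (hl2 : l ≠ 2) (hl3 : l ≠ 3) (hl7 : l ≠ 7)
    (x y z : ℤ) (hxy : IsCoprime x y) (heq : x ^ 7 + y ^ 7 = z ^ l)
    (hz : z ≠ 0) (h7 : ¬ (7 : ℤ) ∣ z) :
    ∃ z₁ z₂ : ℤ, z₁ ≠ 0 ∧ z₂ ≠ 0 ∧ IsCoprime z₁ z₂ ∧
      x + y = z₁ ^ l ∧
      x ^ 6 - x ^ 5 * y + x ^ 4 * y ^ 2 - x ^ 3 * y ^ 3 + x ^ 2 * y ^ 4 - x * y ^ 5 + y ^ 6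
        = z₂ ^ l ∧
      z = z₁ * z₂ := by
  set H : ℤ := x ^ 6 - x ^ 5 * y + x ^ 4 * y ^ 2 - x ^ 3 * y ^ 3 + x ^ 2 * y ^ 4 - x * y ^ 5 + y ^ 6 with hH
  have hodd : Odd l := hl.odd_of_ne_two hl2
  have hAB : (x + y) * H = z ^ l := by rw [← heq, hH]; ring
  have h7p : Prime (7 : ℤ) := by norm_num
  have h7xy : ¬ (7 : ℤ) ∣ (x + y) := by
    intro hd
    exact h7 (h7p.dvd_of_dvd_pow (hAB ▸ hd.mul_right H))
  have hco7 : IsCoprime (x + y) (7 : ℤ) := ((h7p.coprime_iff_not_dvd).2 h7xy).symm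
  have hcoy : IsCoprime (x + y) y := by
    have := hxy.add_mul_left_left 1
    simpa using this
  have hcoAB : IsCoprime (x + y) H := by
    have h1 : IsCoprime (x + y) (7 * y ^ 6) := hco7.mul_right (hcoy.pow_right)
    have h2 : H = 7 * y ^ 6 + (x + y) * (x ^ 5 - 2 * x ^ 4 * y + 3 * x ^ 3 * y ^ 2
        - 4 * x ^ 2 * y ^ 3 + 5 * x * y ^ 4 - 6 * y ^ 5) := by rw [hH]; ring
    rw [h2]
    exact h1.add_mul_left_right _
  obtain ⟨z₁, hz₁⟩ := Int.eq_pow_of_mul_eq_pow_odd_left hcoAB hodd hAB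
  obtain ⟨z₂, hz₂⟩ := Int.eq_pow_of_mul_eq_pow_odd_right hcoAB hodd hAB
  have hzz : z = z₁ * z₂ := by
    have : (z₁ * z₂) ^ l = z ^ l := by rw [mul_pow, ← hz₁, ← hz₂, hAB]
    exact ((Odd.strictMono_pow (R := ℤ) hodd).injective this).symm
  have hz₁0 : z₁ ≠ 0 := by rintro rfl; simp at hzz; exact hz hzz
  have hz₂0 : z₂ ≠ 0 := by rintro rfl; simp at hzz; exact hz hzz
  have hlpos : 0 < l := hl.pos
  refine ⟨z₁, z₂, hz₁0, hz₂0, ?_, hz₁, hz₂, hzz⟩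
  have : IsCoprime (z₁ ^ l) (z₂ ^ l) := by rw [← hz₁, ← hz₂]; exact hcoAB
  exact (IsCoprime.pow_iff hlpos hlpos).1 this
end

section
/- Let θ be a root of t^3 + t^2 - 2t - 1. The only integer solutions (x, y) to x^2 + θxy + y^2 = ±1 with x, y ∈ ℤ (viewed in ℤ[θ]) satisfy xy = 0. -/
/-! If `xy ≠ 0`, the equation makes `θ * (x * y)` an integer, so `θ` would be rational. But a
rational root of the monic integer cubic `t³ + t² - 2t - 1` is an integer dividing its constant
term, and neither `1` nor `-1` is a root. -/

open Polynomial

theorem irrational_of_aeval_eq_zero_of_monic {p : ℤ[X]} (hp : p.Monic) {x : ℝ}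
    (hx : aeval x p = 0) (hint : ∀ n : ℤ, ¬ p.IsRoot n) : Irrational x := by
  rintro ⟨q, rfl⟩
  have hq : aeval q p = 0 := by
    rw [← (algebraMap ℚ ℝ).injective.eq_iff, map_zero, ← aeval_algebraMap_apply]
    exact hx
  obtain ⟨n, rfl⟩ := isInteger_of_is_root_of_monic hp hq
  rw [aeval_algebraMap_apply, map_eq_zero_iff _ (algebraMap ℤ ℚ).injective_int] at hq
  exact hint n hq

theorem int_cubic_ne_zero (n : ℤ) : n ^ 3 + n ^ 2 - 2 * n - 1 ≠ 0 := by
  intro h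
  have hunit : n * (n ^ 2 + n - 2) = 1 := by linear_combination h
  rcases Int.eq_one_or_neg_one_of_mul_eq_one hunit with rfl | rfl <;> norm_num at h

theorem irrational_of_cubic_root {θ : ℝ} (hθ : θ ^ 3 + θ ^ 2 - 2 * θ - 1 = 0) :
    Irrational θ := by
  refine irrational_of_aeval_eq_zero_of_monic (p := X ^ 3 + X ^ 2 - 2 * X - 1) ?_ ?_ ?_
  · monicity!
  · simpa [map_ofNat] using hθ
  · intro n hn
    exact int_cubic_ne_zero n (by simpa using hn)

theorem unit_norm_form_eq_pm_one (θ : ℝ) (hθ : θ ^ 3 + θ ^ 2 - 2 * θ - 1 = 0)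
    (x y : ℤ)
    (h : (x : ℝ) ^ 2 + θ * x * y + y ^ 2 = 1 ∨ (x : ℝ) ^ 2 + θ * x * y + y ^ 2 = -1) :
    x * y = 0 := by
  by_contra hxy
  obtain ⟨c, hc⟩ : ∃ c : ℤ, θ * ((x * y : ℤ) : ℝ) = c := by
    rcases h with h | h
    · exact ⟨1 - x ^ 2 - y ^ 2, by push_cast; linear_combination h⟩
    · exact ⟨-1 - x ^ 2 - y ^ 2, by push_cast; linear_combination h⟩
  exact Int.not_irrational c (hc ▸ (irrational_of_cubic_root hθ).mul_intCast hxy)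
end

section
/- Suppose x, y, z are nonzero coprime integers with x^5 + y^5 = z^l for an odd prime l and 5 ∤ z, and write x + y = z_1^l, H_5(x,y) = z_2^l with z_1, z_2 coprime nonzero integers. Then (z_2/z_1^4, 5(x^2+y^2)/z_1^{2l}) is a rational solution of Y^2 = 20X^l + 5, and it is not equal to (1, 5) or (1, -5). -/
/-!
Since `5 (x² + y²)² = 4 H₅(x, y) + (x + y)⁴`, substituting `x + y = z₁ˡ` and `H₅(x, y) = z₂ˡ`
and dividing by `z₁^(4l)` gives `Y² = 20 Xˡ + 5` for `X = z₂ / z₁⁴`, `Y = 5 (x² + y²) / z₁^(2l)`.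
If `X = 1`, then `z₂ = z₁⁴` and coprimality makes `z₁ = ±1`, so `x + y = ±1` and `H₅(x, y) = 1`;
the identity then gives `x² + y² = 1`, forcing `xy = 0`.
-/

def quinticCofactor {R : Type*} [CommRing R] (x y : R) : R :=
  x ^ 4 - x ^ 3 * y + x ^ 2 * y ^ 2 - x * y ^ 3 + y ^ 4

theorem five_mul_sq_add_sq_sq {R : Type*} [CommRing R] (x y : R) :
    5 * (x ^ 2 + y ^ 2) ^ 2 = 4 * quinticCofactor x y + (x + y) ^ 4 := by
  unfold quinticCofactor; ring

theorem sq_div_pow_eq_twenty_mul_div_pow_add_five {K : Type*} [Field K] (l : ℕ) (x y u v : K)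
    (hu : u ≠ 0) (hsum : x + y = u ^ l) (hH : quinticCofactor x y = v ^ l) :
    (5 * (x ^ 2 + y ^ 2) / u ^ (2 * l)) ^ 2 = 20 * (v / u ^ 4) ^ l + 5 := by
  have key : 25 * (x ^ 2 + y ^ 2) ^ 2 = 20 * v ^ l + 5 * (u ^ l) ^ 4 := by
    rw [← hsum, ← hH]
    linear_combination 5 * five_mul_sq_add_sq_sq x y
  have hul : u ^ l ≠ 0 := pow_ne_zero l hu
  have h2l : u ^ (2 * l) = (u ^ l) ^ 2 := by rw [← pow_mul, mul_comm]
  have h4l : (u ^ 4) ^ l = (u ^ l) ^ 4 := by rw [← pow_mul, ← pow_mul, mul_comm]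
  rw [h2l, div_pow, div_pow, h4l]
  field_simp
  linear_combination key

theorem IsCoprime.isUnit_of_eq_pow {R : Type*} [CommSemiring R] {a b : R} {n : ℕ}
    (h : IsCoprime a b) (hn : n ≠ 0) (hb : b = a ^ n) : IsUnit a :=
  h.isUnit_of_dvd' dvd_rfl (hb ▸ dvd_pow_self a hn)

theorem Int.mul_eq_zero_of_quinticCofactor_eq_one {x y : ℤ} (hsum : (x + y) ^ 4 = 1)
    (hH : quinticCofactor x y = 1) : x * y = 0 := by
  have h : (x ^ 2 + y ^ 2) ^ 2 = 1 := by
    refine mul_left_cancel₀ (show (5 : ℤ) ≠ 0 by norm_num) ?_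
    linear_combination five_mul_sq_add_sq_sq x y + 4 * hH + hsum
  have hsq : x ^ 2 + y ^ 2 = 1 := by
    nlinarith [sq_nonneg x, sq_nonneg y]
  nlinarith [sq_nonneg x, sq_nonneg y, sq_nonneg (x * y)]

theorem point_on_Cl_from_solution_general (l : ℕ)
    (x y z z₁ z₂ : ℤ)
    (hnz : x * y * z ≠ 0)
    (hz₁ : z₁ ≠ 0) (hz₁z₂ : IsCoprime z₁ z₂)
    (hsum : x + y = z₁ ^ l)
    (hH : x ^ 4 - x ^ 3 * y + x ^ 2 * y ^ 2 - x * y ^ 3 + y ^ 4 = z₂ ^ l) :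
    (5 * ((x : ℚ) ^ 2 + (y : ℚ) ^ 2) / (z₁ : ℚ) ^ (2 * l)) ^ 2 =
        20 * ((z₂ : ℚ) / (z₁ : ℚ) ^ 4) ^ l + 5 ∧
    ¬ ((z₂ : ℚ) / (z₁ : ℚ) ^ 4 = 1 ∧
        5 * ((x : ℚ) ^ 2 + (y : ℚ) ^ 2) / (z₁ : ℚ) ^ (2 * l) = 5) ∧
    ¬ ((z₂ : ℚ) / (z₁ : ℚ) ^ 4 = 1 ∧
        5 * ((x : ℚ) ^ 2 + (y : ℚ) ^ 2) / (z₁ : ℚ) ^ (2 * l) = -5) := by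
  have hz₁Q : (z₁ : ℚ) ≠ 0 := Int.cast_ne_zero.mpr hz₁
  have hX : (z₂ : ℚ) / (z₁ : ℚ) ^ 4 ≠ 1 := by
    intro h
    have hz₂z₁ : z₂ = z₁ ^ 4 := by exact_mod_cast (div_eq_one_iff_eq (pow_ne_zero 4 hz₁Q)).mp h
    have hz₁4 : z₁ ^ 4 = 1 := by
      rcases Int.isUnit_iff.mp (hz₁z₂.isUnit_of_eq_pow four_ne_zero hz₂z₁) with rfl | rfl <;>
        norm_num
    refine hnz (mul_eq_zero_of_left (Int.mul_eq_zero_of_quinticCofactor_eq_one ?_ ?_) z)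
    · rw [hsum, ← pow_mul, mul_comm, pow_mul, hz₁4, one_pow]
    · rw [quinticCofactor, hH, hz₂z₁, hz₁4, one_pow]
  refine ⟨?_, fun h => hX h.1, fun h => hX h.1⟩
  exact sq_div_pow_eq_twenty_mul_div_pow_add_five l _ _ _ _ hz₁Q (by exact_mod_cast hsum)
    (by rw [quinticCofactor]; exact_mod_cast hH)

theorem point_on_Cl_from_solution (l : ℕ) (hl : l.Prime) (hodd : Odd l)
    (x y z z₁ z₂ : ℤ) (hxy : IsCoprime x y) (heq : x ^ 5 + y ^ 5 = z ^ l)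
    (hnz : x * y * z ≠ 0) (h5 : ¬ (5 : ℤ) ∣ z)
    (hz₁ : z₁ ≠ 0) (hz₂ : z₂ ≠ 0) (hz₁z₂ : IsCoprime z₁ z₂)
    (hsum : x + y = z₁ ^ l)
    (hH : x ^ 4 - x ^ 3 * y + x ^ 2 * y ^ 2 - x * y ^ 3 + y ^ 4 = z₂ ^ l)
    (hz : z = z₁ * z₂) :
    (5 * ((x : ℚ) ^ 2 + (y : ℚ) ^ 2) / (z₁ : ℚ) ^ (2 * l)) ^ 2 =
        20 * ((z₂ : ℚ) / (z₁ : ℚ) ^ 4) ^ l + 5 ∧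
    ¬ ((z₂ : ℚ) / (z₁ : ℚ) ^ 4 = 1 ∧
        5 * ((x : ℚ) ^ 2 + (y : ℚ) ^ 2) / (z₁ : ℚ) ^ (2 * l) = 5) ∧
    ¬ ((z₂ : ℚ) / (z₁ : ℚ) ^ 4 = 1 ∧
        5 * ((x : ℚ) ^ 2 + (y : ℚ) ^ 2) / (z₁ : ℚ) ^ (2 * l) = -5) :=
  point_on_Cl_from_solution_general l x y z z₁ z₂ hnz hz₁ hz₁z₂ hsum hH
end
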